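/- For every integer n > 1, the Möbius dual of the Fibonacci sequence at n, defined as M_n = ∏_{d | n} F_d^{μ(n/d)} (a product over the divisors of n of Fibonacci numbers raised to Möbius function exponents, taken in the rationals), is a positive integer. -/

import Mathlib

open ArithmeticFunction Finset

private lemma musum (m : ℕ) (hm : m ≠ 0) : ∑ e ∈ m.divisors, moebius e = if m = 1 then 1 else 0 := by
  have h := congrArg (fun f : ArithmeticFunction ℤ => f m) moebius_mul_coe_zeta
  simp only [mul_apply, ArithmeticFunction.one_apply] at h
  rw [Nat.sum_divisorsAntidiagonal (f := fun x y => moebius x * (zeta : ArithmeticFunction ℤ) y)] at h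
  rw [← h]
  apply Finset.sum_congr rfl
  intro d hd
  rw [natCoe_apply, zeta_apply_ne, Nat.cast_one, mul_one]
  exact (Nat.div_ne_zero_iff_of_dvd ((Nat.mem_divisors.mp hd).1)).mpr ⟨hm, (Nat.pos_of_mem_divisors hd).ne'⟩

lemma fibAuxNeZero {d : ℕ} (hd : d ≠ 0) : Nat.fib d ≠ 0 :=
  (Nat.fib_pos.mpr (Nat.pos_of_ne_zero hd)).ne'

private lemma core (n : ℕ) (hn : n ≠ 0) (p : ℕ) :
    0 ≤ ∑ d ∈ n.divisors, (moebius (n / d)) * ((Nat.fib d).factorization p : ℤ) := by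
  set f : ℕ → ℕ := fun d => (Nat.fib d).factorization p with hf
  set N := f n with hN
  -- monotonicity along divisibility
  have hmono : ∀ {a b : ℕ}, a ≠ 0 → b ≠ 0 → a ∣ b → f a ≤ f b := by
    intro a b ha hb hab
    exact (Nat.factorization_le_iff_dvd (fibAuxNeZero ha) (fibAuxNeZero hb)).mpr
      (Nat.fib_dvd a b hab) p
  have hfd : ∀ d ∈ n.divisors, f d ≤ N := fun d hd =>
    hmono (Nat.pos_of_mem_divisors hd).ne' hn (Nat.mem_divisors.mp hd).1
  -- layered representation
  have hlayer : ∀ d ∈ n.divisors, (f d : ℤ) = ∑ k ∈ Icc 1 N, (if k ≤ f d then (1:ℤ) else 0) := by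
    intro d hd
    rw [← Finset.sum_filter]
    have : (Icc 1 N).filter (fun k => k ≤ f d) = Icc 1 (f d) := by
      ext k; simp only [mem_filter, mem_Icc]
      have := hfd d hd; omega
    simp [this]
  rw [Finset.sum_congr rfl (fun d hd => by rw [hlayer d hd])]
  simp_rw [Finset.mul_sum]
  rw [Finset.sum_comm]
  apply Finset.sum_nonneg
  intro k hk
  -- the set of divisors with valuation ≥ k
  set S := n.divisors.filter (fun d => k ≤ f d) with hS
  have hnS : n ∈ S := by
    rw [hS, mem_filter]
    exact ⟨Nat.mem_divisors_self n hn, (mem_Icc.mp hk).2⟩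
  have hSne : S.Nonempty := ⟨n, hnS⟩
  set r := S.min' hSne with hr
  have hrS : r ∈ S := S.min'_mem hSne
  have hrdiv : r ∈ n.divisors := (mem_filter.mp hrS).1
  have hrn : r ∣ n := (Nat.mem_divisors.mp hrdiv).1
  have hr0 : r ≠ 0 := (Nat.pos_of_mem_divisors hrdiv).ne'
  have hkey : ∀ d ∈ n.divisors, (k ≤ f d ↔ r ∣ d) := by
    intro d hd
    have hd0 : d ≠ 0 := (Nat.pos_of_mem_divisors hd).ne'
    constructor
    · intro hkd
      have hg : Nat.gcd r d ∈ S := by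
        rw [hS, mem_filter]
        refine ⟨Nat.mem_divisors.mpr ⟨(Nat.gcd_dvd_left r d).trans hrn, hn⟩, ?_⟩
        have : f (Nat.gcd r d) = min (f r) (f d) := by
          rw [hf]
          simp only
          rw [Nat.fib_gcd, Nat.factorization_gcd (fibAuxNeZero hr0) (fibAuxNeZero hd0)]
          rfl
        rw [this]
        exact le_min (mem_filter.mp hrS).2 hkd
      have h1 : r ≤ Nat.gcd r d := S.min'_le _ hg
      have h2 : Nat.gcd r d ≤ r := Nat.le_of_dvd (Nat.pos_of_ne_zero hr0) (Nat.gcd_dvd_left r d)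
      have : Nat.gcd r d = r := le_antisymm h2 h1
      rw [← this]; exact Nat.gcd_dvd_right r d
    · intro hrd
      exact le_trans (mem_filter.mp hrS).2 (hmono hr0 hd0 hrd)
  -- reindex the inner sum
  have hstep : ∑ d ∈ n.divisors, (if k ≤ f d then (moebius (n / d) : ℤ) else 0)
      = ∑ e ∈ (n / r).divisors, moebius ((n / r) / e) := by
    rw [← Finset.sum_filter]
    apply Finset.sum_nbij' (i := fun d => d / r) (j := fun e => r * e)
    · intro d hd
      have hd' := mem_filter.mp hd
      have hrd : r ∣ d := (hkey d hd'.1).mp hd'.2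
      obtain ⟨c, hc⟩ := (Nat.mem_divisors.mp hd'.1).1
      refine Nat.mem_divisors.mpr ⟨⟨c, ?_⟩, (Nat.div_ne_zero_iff_of_dvd hrn).mpr ⟨hn, hr0⟩⟩
      rw [hc, mul_comm d c, Nat.mul_div_assoc c hrd, mul_comm]
    · intro e he
      have he' := Nat.mem_divisors.mp he
      have : r * e ∣ n := by
        obtain ⟨c, hc⟩ := he'.1
        refine ⟨c, ?_⟩
        rw [mul_assoc, ← hc, Nat.mul_div_cancel' hrn]
      rw [mem_filter]
      exact ⟨Nat.mem_divisors.mpr ⟨this, hn⟩, (hkey _ (Nat.mem_divisors.mpr ⟨this, hn⟩)).mpr ⟨e, rfl⟩⟩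
    · intro d hd
      have hd' := mem_filter.mp hd
      exact Nat.mul_div_cancel' ((hkey d hd'.1).mp hd'.2)
    · intro e he
      exact Nat.mul_div_cancel_left e (Nat.pos_of_ne_zero hr0)
    · intro d hd
      have hd' := mem_filter.mp hd
      have hrd : r ∣ d := (hkey d hd'.1).mp hd'.2
      congr 1
      rw [Nat.div_div_eq_div_mul, Nat.mul_div_cancel' hrd]
  calc (0:ℤ) ≤ if n / r = 1 then 1 else 0 := by positivity
    _ = ∑ d ∈ n.divisors, (if k ≤ f d then (moebius (n / d) : ℤ) else 0) := by
        rw [hstep, Nat.sum_div_divisors (n := n / r) (f := fun e => (moebius e : ℤ)),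
          musum _ ((Nat.div_ne_zero_iff_of_dvd hrn).mpr ⟨hn, hr0⟩)]
    _ = ∑ d ∈ n.divisors, (moebius (n/d)) * (if k ≤ f d then (1:ℤ) else 0) := by
        apply Finset.sum_congr rfl; intro d _; rw [mul_ite, mul_one, mul_zero]

theorem fib_moebius_dual_pos_int (n : ℕ) (hn : 1 < n) :
    ∃ m : ℤ, 0 < m ∧
      ∏ d ∈ n.divisors, ((Nat.fib d : ℚ)) ^ (moebius (n / d)) = (m : ℚ) := by
  have hn0 : n ≠ 0 := by omega
  set a : ℕ → ℕ := fun d => (moebius (n / d)).toNat with ha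
  set b : ℕ → ℕ := fun d => (-(moebius (n / d))).toNat with hb
  have hab : ∀ d, (a d : ℤ) - b d = moebius (n / d) := fun d =>
    Int.toNat_sub_toNat_neg _
  set P := ∏ d ∈ n.divisors, Nat.fib d ^ a d with hP
  set Q := ∏ d ∈ n.divisors, Nat.fib d ^ b d with hQ
  have hfib0 : ∀ d ∈ n.divisors, Nat.fib d ≠ 0 := fun d hd =>
    (Nat.fib_pos.mpr (Nat.pos_of_mem_divisors hd)).ne'
  have hP0 : P ≠ 0 := Finset.prod_ne_zero_iff.mpr fun d hd => pow_ne_zero _ (hfib0 d hd)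
  have hQ0 : Q ≠ 0 := Finset.prod_ne_zero_iff.mpr fun d hd => pow_ne_zero _ (hfib0 d hd)
  have hQP : Q ∣ P := by
    rw [← Nat.factorization_le_iff_dvd hQ0 hP0]
    intro p
    rw [hP, hQ, Nat.factorization_prod (fun d hd => pow_ne_zero _ (hfib0 d hd)),
      Nat.factorization_prod (fun d hd => pow_ne_zero _ (hfib0 d hd))]
    simp only [Nat.factorization_pow, Finset.sum_apply', Finsupp.smul_apply, smul_eq_mul]
    have := core n hn0 p
    zify
    have expand : ∀ d ∈ n.divisors,
        (a d : ℤ) * ((Nat.fib d).factorization p : ℤ) - (b d) * ((Nat.fib d).factorization p : ℤ)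
        = moebius (n / d) * ((Nat.fib d).factorization p : ℤ) := by
      intro d _; rw [← sub_mul, hab d]
    have : (0:ℤ) ≤ ∑ d ∈ n.divisors, ((a d : ℤ) * ((Nat.fib d).factorization p : ℤ)
        - (b d) * ((Nat.fib d).factorization p : ℤ)) := by
      rw [Finset.sum_congr rfl expand]; exact this
    rw [Finset.sum_sub_distrib] at this
    linarith
  refine ⟨(P / Q : ℕ), ?_, ?_⟩
  · exact_mod_cast Nat.div_pos (Nat.le_of_dvd (Nat.pos_of_ne_zero hP0) hQP) (Nat.pos_of_ne_zero hQ0)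
  · have hprod : ∏ d ∈ n.divisors, ((Nat.fib d : ℚ)) ^ (moebius (n / d)) = (P : ℚ) / Q := by
      rw [hP, hQ]
      push_cast
      rw [← Finset.prod_div_distrib]
      apply Finset.prod_congr rfl
      intro d hd
      have h0 : (Nat.fib d : ℚ) ≠ 0 := Nat.cast_ne_zero.mpr (hfib0 d hd)
      rw [← hab d, zpow_sub₀ h0, zpow_natCast, zpow_natCast]
    rw [hprod, Int.cast_natCast, Nat.cast_div hQP (by exact_mod_cast hQ0 : (Q:ℚ) ≠ 0)]
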